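/- Griffiths' second inequality for Ising lattice gauge theory: for every β ≥ 0, every N ≥ 1 and all loops γ₁, γ₂ supported in B_N (with 𝒞_{γ₁}, 𝒞_{γ₂} nonempty), E_{N,β}[W_{γ₁} W_{γ₂}] ≥ E_{N,β}[W_{γ₁}] · E_{N,β}[W_{γ₂}]. -/

import Mathlib

open scoped Classical

namespace LGT

/-- A site (vertex) of the lattice `ℤ^m`. -/
abbrev Site (m : ℕ) := Fin m → ℤ

/-- The `i`-th unit vector. -/
def unitVec (m : ℕ) (i : Fin m) : Site m := fun j => if j = i then 1 else 0

/-- An oriented nearest-neighbour edge of `ℤ^m`: it joins `base` and `base + e_dir`,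
oriented from `base` to `base + e_dir` when `ori = true`, and oppositely otherwise. -/
structure OEdge (m : ℕ) where
  base : Site m
  dir : Fin m
  ori : Bool
deriving DecidableEq

/-- An oriented plaquette of `ℤ^m` (valid when `dir1 < dir2`): the unit square with
corners `base, base + e_dir1, base + e_dir2, base + e_dir1 + e_dir2`, positively
oriented when `ori = true`. -/
structure OPlaq (m : ℕ) where
  base : Site m
  dir1 : Fin m
  dir2 : Fin m
  ori : Bool
deriving DecidableEq

/-- The same edge with reversed orientation. -/
def OEdge.neg {m : ℕ} (e : OEdge m) : OEdge m := ⟨e.base, e.dir, !e.ori⟩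

/-- The same plaquette with reversed orientation. -/
def OPlaq.neg {m : ℕ} (p : OPlaq m) : OPlaq m := ⟨p.base, p.dir1, p.dir2, !p.ori⟩

/-- The source vertex of an oriented edge. -/
def OEdge.src {m : ℕ} (e : OEdge m) : Site m :=
  if e.ori then e.base else e.base + unitVec m e.dir

/-- The target vertex of an oriented edge. -/
def OEdge.tgt {m : ℕ} (e : OEdge m) : Site m :=
  if e.ori then e.base + unitVec m e.dir else e.base

/-- `x ∈ B_N = [-N,N]^m ∩ ℤ^m`. -/
def inBox (m N : ℕ) (x : Site m) : Prop := ∀ i, |x i| ≤ (N : ℤ)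

/-- `C_1(B_N)`: oriented edges with both endpoints in `B_N`. -/
def C1 (m N : ℕ) : Set (OEdge m) :=
  {e | inBox m N e.base ∧ inBox m N (e.base + unitVec m e.dir)}

/-- The four corners of a plaquette. -/
def OPlaq.corners {m : ℕ} (p : OPlaq m) : List (Site m) :=
  [p.base, p.base + unitVec m p.dir1, p.base + unitVec m p.dir2,
    p.base + unitVec m p.dir1 + unitVec m p.dir2]

/-- The four oriented boundary edges of an oriented plaquette. -/
def OPlaq.bdry {m : ℕ} (p : OPlaq m) : List (OEdge m) :=
  let l : List (OEdge m) :=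
    [⟨p.base, p.dir1, true⟩, ⟨p.base + unitVec m p.dir1, p.dir2, true⟩,
     ⟨p.base + unitVec m p.dir2, p.dir1, false⟩, ⟨p.base, p.dir2, false⟩]
  if p.ori then l else l.map OEdge.neg

/-- `C_2(B_N)`: oriented plaquettes with all corners in `B_N`. -/
def C2 (m N : ℕ) : Set (OPlaq m) :=
  {p | p.dir1 < p.dir2 ∧ ∀ x ∈ p.corners, inBox m N x}

/-- `C_2(B_N)^+`: positively oriented plaquettes of `C_2(B_N)`. -/
def C2plus (m N : ℕ) : Set (OPlaq m) := {p | p ∈ C2 m N ∧ p.ori = true}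

/-- `supp ∂̂e`: the plaquettes of `C_2(B_N)` whose oriented boundary contains `e`. -/
def cob (m N : ℕ) (e : OEdge m) : Set (OPlaq m) := {p | p ∈ C2 m N ∧ e ∈ p.bdry}

/-- A loop: a finitely supported `ℤ`-valued function on oriented edges with values in
`{-1,0,1}`, odd under orientation reversal, whose boundary vanishes as a `0`-chain. -/
structure IsLoop (m : ℕ) (γ : OEdge m → ℤ) : Prop where
  finite_supp : (Function.support γ).Finite
  vals : ∀ e, γ e = -1 ∨ γ e = 0 ∨ γ e = 1
  antisym : ∀ e, γ (OEdge.neg e) = - γ e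
  bdry_zero : ∀ v : Site m,
    (∑ᶠ e : OEdge m, γ e *
      ((if OEdge.tgt e = v then 1 else 0) - (if OEdge.src e = v then (1 : ℤ) else 0))) = 0

/-- A loop supported in `B_N`. -/
def LoopIn (m N : ℕ) (γ : OEdge m → ℤ) : Prop :=
  IsLoop m γ ∧ ∀ e, γ e ≠ 0 → e ∈ C1 m N

/-- `Ω^1(B_N, ℤ₂)`: `ℤ₂`-valued one-forms on `C_1(B_N)`. -/
def Omega1 (m N : ℕ) : Set (OEdge m → ZMod 2) :=
  {σ | (∀ e, e ∉ C1 m N → σ e = 0) ∧ ∀ e, σ (OEdge.neg e) = - σ e}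

/-- The natural representation `ρ(g) = e^{iπ g} ∈ {±1}` of `ℤ₂`. -/
noncomputable def rho (g : ZMod 2) : ℝ := if g = 0 then 1 else -1

/-- The exterior derivative `dσ(p) = Σ_{e ∈ ∂p} σ(e)`. -/
def dOne {m : ℕ} (σ : OEdge m → ZMod 2) (p : OPlaq m) : ZMod 2 := (p.bdry.map σ).sum

/-- The Wilson action `S(σ) = -Σ_{p ∈ C_2(B_N)} ρ(dσ(p))`. -/
noncomputable def action (m N : ℕ) (σ : OEdge m → ZMod 2) : ℝ :=
  - ∑ᶠ p ∈ C2 m N, rho (dOne σ p)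

/-- The Wilson loop variable `W_γ(σ) = Π_{e ∈ (supp γ)^+} ρ(σ(e))`. -/
noncomputable def wilson (m : ℕ) (γ : OEdge m → ℤ) (σ : OEdge m → ZMod 2) : ℝ :=
  ∏ᶠ e ∈ {e : OEdge m | γ e ≠ 0 ∧ e.ori = true}, rho (σ e)

/-- `Z_{β,N}[γ] = Σ_{σ ∈ Ω^1(B_N,ℤ₂)} W_γ(σ) e^{-β S(σ)}`. -/
noncomputable def Z (m N : ℕ) (β : ℝ) (γ : OEdge m → ℤ) : ℝ :=
  ∑ᶠ σ ∈ Omega1 m N, wilson m γ σ * Real.exp (- β * action m N σ)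

/-- The finite-volume Gibbs expectation `E_{N,β}[f]`. -/
noncomputable def Eexp (m N : ℕ) (β : ℝ) (f : (OEdge m → ZMod 2) → ℝ) : ℝ :=
  (∑ᶠ σ ∈ Omega1 m N, f σ * Real.exp (- β * action m N σ)) /
    (∑ᶠ σ ∈ Omega1 m N, Real.exp (- β * action m N σ))

/-- `E_{N,β}[W_γ]`. -/
noncomputable def Ewilson (m N : ℕ) (β : ℝ) (γ : OEdge m → ℤ) : ℝ :=
  Eexp m N β (wilson m γ)

/-- A current: an integer-valued `2`-form on `C_2(B_N)` that is nonnegative on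
positively oriented plaquettes. -/
def IsCurrent (m N : ℕ) (n : OPlaq m → ℤ) : Prop :=
  (∀ p, p ∉ C2 m N → n p = 0) ∧ (∀ p, n (OPlaq.neg p) = - n p) ∧
    (∀ p ∈ C2plus m N, 0 ≤ n p)

/-- `𝒞_γ`: the currents with source `γ`. -/
def CurSet (m N : ℕ) (γ : OEdge m → ℤ) : Set (OPlaq m → ℤ) :=
  {n | IsCurrent m N n ∧ ∀ e ∈ C1 m N,
      ((γ e : ZMod 2) + ∑ᶠ p ∈ cob m N e, ((n p : ZMod 2))) = 0}

/-- The weight `w_β(n) = Π_{p ∈ C_2(B_N)^+} (2β)^{n(p)}/n(p)!` of a current. -/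
noncomputable def wgt (m N : ℕ) (β : ℝ) (n : OPlaq m → ℤ) : ℝ :=
  ∏ᶠ p ∈ C2plus m N, (2 * β) ^ (n p).toNat / (Nat.factorial (n p).toNat)

/-- `q ≤ n` on positively oriented plaquettes. -/
def leOn (m N : ℕ) (q n : OPlaq m → ℤ) : Prop := ∀ p ∈ C2plus m N, q p ≤ n p

/-- `𝒫_γ^{ht}`: `ℤ₂`-valued `2`-forms on `C_2(B_N)` with `δω = γ (mod 2)`. -/
def HTset (m N : ℕ) (γ : OEdge m → ℤ) : Set (OPlaq m → ZMod 2) :=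
  {ω | (∀ p, p ∉ C2 m N → ω p = 0) ∧ (∀ p, ω (OPlaq.neg p) = - ω p) ∧
    ∀ e ∈ C1 m N, (∑ᶠ p ∈ cob m N e, ω p) = (γ e : ZMod 2)}

/-- `(supp ω)^+`. -/
def suppPlus (m N : ℕ) (ω : OPlaq m → ZMod 2) : Set (OPlaq m) :=
  {p | p ∈ C2plus m N ∧ ω p ≠ 0}

/-- The high-temperature weight `(tanh 2β)^{|(supp ω)^+|}`. -/
noncomputable def htWeight (m N : ℕ) (β : ℝ) (ω : OPlaq m → ZMod 2) : ℝ :=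
  Real.tanh (2 * β) ^ (Nat.card ↥(suppPlus m N ω))

/-- The high-temperature model `P^γ_{B_N,β}`: probability mass of `ω ∈ 𝒫_γ^{ht}`. -/
noncomputable def htProb (m N : ℕ) (β : ℝ) (γ : OEdge m → ℤ) (ω : OPlaq m → ZMod 2) : ℝ :=
  htWeight m N β ω / ∑ᶠ ω' ∈ HTset m N γ, htWeight m N β ω'

/-- The random current model `𝐏^γ_{B_N,β}`: probability of an event `A ⊆ 𝒞_γ`. -/
noncomputable def rcProb (m N : ℕ) (β : ℝ) (γ : OEdge m → ℤ) (A : Set (OPlaq m → ℤ)) : ℝ :=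
  (∑' n : ↥(CurSet m N γ ∩ A), wgt m N β n) / (∑' n : ↥(CurSet m N γ), wgt m N β n)

/-- The trace `n̂` of a current: the set of positively oriented plaquettes where `n > 0`. -/
def hatCur (m N : ℕ) (n : OPlaq m → ℤ) : Set (OPlaq m) :=
  {p | p ∈ C2plus m N ∧ 0 < n p}

/-- The probability that iid Bernoulli plaquette percolation `Ψ_q` on `C_2(B_N)^+`
produces exactly the configuration (subset) `A`. -/
noncomputable def bernoulli (m N : ℕ) (q : ℝ) (A : Set (OPlaq m)) : ℝ :=
  ∏ᶠ p ∈ C2plus m N, (if p ∈ A then q else 1 - q)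

/-- `∂P ≡ γ (mod 2)`: for every edge `e ∈ C_1(B_N)` the number of plaquettes of `P`
whose boundary contains `e` or `-e` is congruent to `γ(e)` mod `2`. -/
def BdryCong (m N : ℕ) (P : Set (OPlaq m)) (γ : OEdge m → ℤ) : Prop :=
  ∀ e ∈ C1 m N,
    ((Nat.card ↥{p ∈ P | e ∈ p.bdry ∨ OEdge.neg e ∈ p.bdry} : ZMod 2)) = (γ e : ZMod 2)

/-- `𝒫_γ`: subsets of `C_2(B_N)^+` containing a subset with boundary `γ (mod 2)`. -/
def PlaqSet (m N : ℕ) (γ : OEdge m → ℤ) : Set (Set (OPlaq m)) :=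
  {P | P ⊆ C2plus m N ∧ ∃ P', P' ⊆ P ∧ BdryCong m N P' γ}

/-- `N₀(P)`: the number of `σ ∈ Ω^1(B_N,ℤ₂)` with `dσ(p) = 0` for all `p ∈ P`. -/
noncomputable def N0 (m N : ℕ) (P : Set (OPlaq m)) : ℕ :=
  Nat.card ↥{σ ∈ Omega1 m N | ∀ p ∈ P, dOne σ p = 0}

/-- The random cluster weight `N₀(P) q^{|P|} (1-q)^{|C_2(B_N)^+ ∖ P|}`. -/
noncomputable def rcmWeight (m N : ℕ) (q : ℝ) (P : Set (OPlaq m)) : ℝ :=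
  (N0 m N P : ℝ) * q ^ (Nat.card ↥P) * (1 - q) ^ (Nat.card ↥(C2plus m N \ P))

/-- The random cluster model `φ^γ_{B_N,q}`: probability mass of `P` (zero off `𝒫_γ`). -/
noncomputable def rcmProb (m N : ℕ) (q : ℝ) (γ : OEdge m → ℤ) (P : Set (OPlaq m)) : ℝ :=
  (if P ∈ PlaqSet m N γ then rcmWeight m N q P else 0) /
    ∑ᶠ P' ∈ PlaqSet m N γ, rcmWeight m N q P'

/-- `S_γ(P)`: the subsets of `P` with boundary `γ (mod 2)`. -/
def Sset (m N : ℕ) (γ : OEdge m → ℤ) (P : Set (OPlaq m)) : Set (Set (OPlaq m)) :=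
  {P' | P' ⊆ P ∧ BdryCong m N P' γ}

/-- The `ℤ₂`-valued `2`-form whose support among positively oriented plaquettes is `P'`. -/
noncomputable def formOf {m : ℕ} (P' : Set (OPlaq m)) : OPlaq m → ZMod 2 :=
  fun p => if p ∈ P' ∨ OPlaq.neg p ∈ P' then 1 else 0

/-- The vertices of the support of a loop. -/
def vertsOf (m : ℕ) (γ : OEdge m → ℤ) : Set (Site m) :=
  {x | ∃ e, γ e ≠ 0 ∧ (x = OEdge.src e ∨ x = OEdge.tgt e)}

/-- The graph (`ℓ¹`) distance between two sites of `ℤ^m`. -/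
def distL1 (m : ℕ) (x y : Site m) : ℕ := ∑ i, (x i - y i).natAbs

/-- The minimal graph distance between the supports of two loops. -/
noncomputable def suppDist (m : ℕ) (γ γ' : OEdge m → ℤ) : ℕ :=
  sInf {d | ∃ x ∈ vertsOf m γ, ∃ y ∈ vertsOf m γ', d = distL1 m x y}

/-- `area(γ) = min_{n ∈ 𝒞_γ} Σ_{p ∈ C_2(B_N)^+} n(p)`. -/
noncomputable def areaOf (m N : ℕ) (γ : OEdge m → ℤ) : ℕ :=
  sInf {k : ℕ | ∃ n ∈ CurSet m N γ, (∑ᶠ p ∈ C2plus m N, n p) = (k : ℤ)}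

/-- Translation of a loop by a lattice vector. -/
def translate (m : ℕ) (v : Site m) (γ : OEdge m → ℤ) : OEdge m → ℤ :=
  fun e => γ ⟨e.base - v, e.dir, e.ori⟩

/-- The site `a·e₀ + b·e₁` in the fixed coordinate plane spanned by the first two
coordinate directions. -/
def planeSite (m : ℕ) (h : 1 < m) (a b : ℤ) : Site m :=
  fun j => if j = (⟨0, by omega⟩ : Fin m) then a else if j = (⟨1, h⟩ : Fin m) then b else 0

/-- The axis-parallel rectangular loop `γ_{R,T}` with corners `0, R·e₀, R·e₀+T·e₁, T·e₁`
in the fixed coordinate plane spanned by the first two coordinate directions. -/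
noncomputable def rectLoop (m : ℕ) (h : 1 < m) (R T : ℕ) : OEdge m → ℤ := fun e =>
  (∑ k ∈ Finset.range R,
    ((if e = ⟨planeSite m h k 0, ⟨0, by omega⟩, true⟩ then (1 : ℤ) else 0)
      - (if e = OEdge.neg ⟨planeSite m h k 0, ⟨0, by omega⟩, true⟩ then 1 else 0)
      - (if e = ⟨planeSite m h k T, ⟨0, by omega⟩, true⟩ then 1 else 0)
      + (if e = OEdge.neg ⟨planeSite m h k T, ⟨0, by omega⟩, true⟩ then 1 else 0)))
  + (∑ k ∈ Finset.range T,
    ((if e = ⟨planeSite m h R k, ⟨1, h⟩, true⟩ then (1 : ℤ) else 0)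
      - (if e = OEdge.neg ⟨planeSite m h R k, ⟨1, h⟩, true⟩ then 1 else 0)
      - (if e = ⟨planeSite m h 0 k, ⟨1, h⟩, true⟩ then 1 else 0)
      + (if e = OEdge.neg ⟨planeSite m h 0 k, ⟨1, h⟩, true⟩ then 1 else 0)))


/-!
Wilson loops and the plaquette variables `σ ↦ ρ(dσ(p))` are `±1`-valued characters of the
finite group `Ω^1(B_N, ℤ₂)`, and `e^{-βS}` is the Gibbs weight `exp (∑ᵢ Kᵢ ψᵢ)` of these
plaquette characters with all couplings `Kᵢ = β ≥ 0`. Writing `exp (K ψ) = cosh K + sinh K ψ`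
expands a character sum against such a weight into sums of characters with nonnegative
coefficients, and the sum of a character over a finite group is `|G|` or `0`: this is Griffiths'
first inequality. For the second one, duplicate the variables and substitute `y = x + z`: the
covariance of `χ₁` and `χ₂` becomes `∑_z (1 - χ₂ z) ∑_x χ₁ χ₂ (x) exp (∑ᵢ Kᵢ (1 + ψᵢ z) ψᵢ x)`,
a nonnegative combination of sums covered by the first inequality.
-/

end LGT

open Real

namespace AddChar

variable {G : Type*} [AddGroup G] [Fintype G]

theorem apply_eq_one_or_neg_one (ψ : AddChar G ℝ) (x : G) : ψ x = 1 ∨ ψ x = -1 := by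
  have hpow : ψ x ^ Fintype.card G = 1 := by
    rw [← map_nsmul_eq_pow, card_nsmul_eq_zero, map_zero_eq_one]
  rcases (pow_eq_one_iff_of_ne_zero Fintype.card_ne_zero).1 hpow with h | ⟨h, -⟩
  exacts [Or.inl h, Or.inr h]

theorem sum_nonneg (ψ : AddChar G ℝ) : 0 ≤ ∑ x, ψ x := by
  classical
  rw [sum_eq_ite]
  split_ifs <;> positivity

theorem exp_mul_apply (ψ : AddChar G ℝ) (K : ℝ) (x : G) :
    exp (K * ψ x) = cosh K + sinh K * ψ x := by
  rcases ψ.apply_eq_one_or_neg_one x with h | h <;> rw [h]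
  · simp [cosh_add_sinh]
  · simp [← sub_eq_add_neg, cosh_sub_sinh]

end AddChar

section Griffiths

variable {G ι : Type*} [AddGroup G]

noncomputable def boltzmann (s : Finset ι) (K : ι → ℝ) (ψ : ι → AddChar G ℝ) (x : G) : ℝ :=
  exp (∑ i ∈ s, K i * ψ i x)

noncomputable def gibbsExpect [Fintype G] (s : Finset ι) (K : ι → ℝ) (ψ : ι → AddChar G ℝ)
    (f : G → ℝ) : ℝ :=
  (∑ x, f x * boltzmann s K ψ x) / ∑ x, boltzmann s K ψ x

theorem boltzmann_mul_boltzmann_add (s : Finset ι) (K : ι → ℝ) (ψ : ι → AddChar G ℝ)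
    (x z : G) :
    boltzmann s K ψ x * boltzmann s K ψ (x + z) =
      boltzmann s (fun i => K i * (1 + ψ i z)) ψ x := by
  simp only [boltzmann, ← exp_add, ← Finset.sum_add_distrib, AddChar.map_add_eq_mul]
  congr 1
  exact Finset.sum_congr rfl fun i _ => by ring

variable [Fintype G]

theorem sum_mul_boltzmann_nonneg (s : Finset ι) (K : ι → ℝ) (hK : ∀ i ∈ s, 0 ≤ K i)
    (ψ : ι → AddChar G ℝ) (χ : AddChar G ℝ) :
    0 ≤ ∑ x, χ x * boltzmann s K ψ x := by
  classical
  induction s using Finset.induction generalizing χ with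
  | empty => simpa [boltzmann] using χ.sum_nonneg
  | @insert a s ha ih =>
    have hK' : ∀ i ∈ s, 0 ≤ K i := fun i hi => hK i (Finset.mem_insert_of_mem hi)
    have expand : ∀ x, χ x * boltzmann (insert a s) K ψ x =
        cosh (K a) * (χ x * boltzmann s K ψ x) +
          sinh (K a) * ((χ * ψ a) x * boltzmann s K ψ x) := fun x => by
      rw [boltzmann, Finset.sum_insert ha, exp_add, AddChar.exp_mul_apply, AddChar.mul_apply,
        boltzmann]
      ring
    simp only [expand, Finset.sum_add_distrib, ← Finset.mul_sum]
    have hsinh := sinh_nonneg_iff.2 (hK a (Finset.mem_insert_self a s))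
    have hcosh := (cosh_pos (K a)).le
    have ihχ := ih hK' χ
    have ihχψ := ih hK' (χ * ψ a)
    positivity

theorem sum_mul_sum_sub_sum_mul_sum (w : G → ℝ) (χ₁ χ₂ : AddChar G ℝ) :
    (∑ x, χ₁ x * χ₂ x * w x) * (∑ y, w y) - (∑ x, χ₁ x * w x) * (∑ y, χ₂ y * w y) =
      ∑ z, (1 - χ₂ z) * ∑ x, χ₁ x * χ₂ x * (w x * w (x + z)) := by
  have shift : ∀ (x : G) (g : G → ℝ), ∑ y, g y = ∑ z, g (x + z) := fun x g =>
    (Fintype.sum_equiv (Equiv.addLeft x) _ _ fun _ => rfl).symm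
  rw [Finset.sum_mul_sum, Finset.sum_mul_sum, ← Finset.sum_sub_distrib]
  conv_rhs => simp only [Finset.mul_sum]; rw [Finset.sum_comm]
  refine Finset.sum_congr rfl fun x _ => ?_
  rw [← Finset.sum_sub_distrib, shift x]
  refine Finset.sum_congr rfl fun z _ => ?_
  rw [AddChar.map_add_eq_mul]
  ring

theorem sum_mul_boltzmann_mul_le (s : Finset ι) (K : ι → ℝ) (hK : ∀ i ∈ s, 0 ≤ K i)
    (ψ : ι → AddChar G ℝ) (χ₁ χ₂ : AddChar G ℝ) :
    (∑ x, χ₁ x * boltzmann s K ψ x) * (∑ x, χ₂ x * boltzmann s K ψ x) ≤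
      (∑ x, χ₁ x * χ₂ x * boltzmann s K ψ x) * ∑ x, boltzmann s K ψ x := by
  rw [← sub_nonneg, sum_mul_sum_sub_sum_mul_sum]
  refine Finset.sum_nonneg fun z _ => mul_nonneg ?_ ?_
  · rcases χ₂.apply_eq_one_or_neg_one z with h | h <;> rw [h] <;> norm_num
  · simp only [boltzmann_mul_boltzmann_add, ← AddChar.mul_apply]
    refine sum_mul_boltzmann_nonneg s _ (fun i hi => mul_nonneg (hK i hi) ?_) ψ (χ₁ * χ₂)
    rcases (ψ i).apply_eq_one_or_neg_one z with h | h <;> rw [h] <;> norm_num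

theorem gibbsExpect_mul_le (s : Finset ι) (K : ι → ℝ) (hK : ∀ i ∈ s, 0 ≤ K i)
    (ψ : ι → AddChar G ℝ) (χ₁ χ₂ : AddChar G ℝ) :
    gibbsExpect s K ψ χ₁ * gibbsExpect s K ψ χ₂ ≤
      gibbsExpect s K ψ (fun x => χ₁ x * χ₂ x) := by
  have hZ : 0 < ∑ x, boltzmann s K ψ x :=
    Finset.sum_pos (fun _ _ => exp_pos _) ⟨0, Finset.mem_univ _⟩
  rw [gibbsExpect, gibbsExpect, gibbsExpect, div_mul_div_comm, div_le_div_iff₀ (by positivity) hZ]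
  calc _ = ((∑ x, χ₁ x * boltzmann s K ψ x) * ∑ x, χ₂ x * boltzmann s K ψ x) *
          ∑ x, boltzmann s K ψ x := by ring
    _ ≤ ((∑ x, χ₁ x * χ₂ x * boltzmann s K ψ x) * ∑ x, boltzmann s K ψ x) *
          ∑ x, boltzmann s K ψ x :=
      mul_le_mul_of_nonneg_right (sum_mul_boltzmann_mul_le s K hK ψ χ₁ χ₂) hZ.le
    _ = _ := by ring

end Griffiths

namespace LGT

section

variable {m : ℕ}

theorem finite_inBox (m N : ℕ) : {x : Site m | inBox m N x}.Finite :=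
  (Set.Finite.pi fun _ => Set.finite_Icc (-(N : ℤ)) N).subset fun _ hx i _ => abs_le.1 (hx i)

theorem finite_C1 (m N : ℕ) : (C1 m N).Finite :=
  ((((finite_inBox m N).prod Set.finite_univ).prod Set.finite_univ).image
    fun x : (Site m × Fin m) × Bool => (⟨x.1.1, x.1.2, x.2⟩ : OEdge m)).subset
    fun e he => ⟨((e.base, e.dir), e.ori), ⟨⟨he.1, trivial⟩, trivial⟩, rfl⟩

theorem finite_C2 (m N : ℕ) : (C2 m N).Finite :=
  ((((finite_inBox m N).prod Set.finite_univ).prod (Set.finite_univ.prod Set.finite_univ)).image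
    fun x : (Site m × Fin m) × Fin m × Bool => (⟨x.1.1, x.1.2, x.2.1, x.2.2⟩ : OPlaq m)).subset
    fun p hp => ⟨((p.base, p.dir1), p.dir2, p.ori),
      ⟨⟨hp.2 p.base (by simp [OPlaq.corners]), trivial⟩, trivial, trivial⟩, rfl⟩

theorem finite_Omega1 (m N : ℕ) : (Omega1 m N).Finite := by
  have := (finite_C1 m N).to_subtype
  refine Set.finite_coe_iff.1 (Finite.of_injective
    (fun σ : Omega1 m N => fun e : C1 m N => σ.1 e) fun σ τ h => Subtype.ext (funext fun e => ?_))
  by_cases he : e ∈ C1 m N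
  · exact congrFun h ⟨e, he⟩
  · rw [σ.2.1 e he, τ.2.1 e he]

def Omega1Group (m N : ℕ) : AddSubgroup (OEdge m → ZMod 2) where
  carrier := Omega1 m N
  zero_mem' := ⟨fun _ _ => rfl, fun _ => neg_zero.symm⟩
  add_mem' ha hb := ⟨fun e he => by simp [ha.1 e he, hb.1 e he],
    fun e => by simp [ha.2 e, hb.2 e, add_comm]⟩
  neg_mem' ha := ⟨fun e he => by simp [ha.1 e he], fun e => by simp [ha.2 e]⟩

instance (m N : ℕ) : Finite (Omega1Group m N) := (finite_Omega1 m N).to_subtype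

noncomputable instance (m N : ℕ) : Fintype (Omega1Group m N) := Fintype.ofFinite _

theorem finsum_mem_Omega1_eq_sum (N : ℕ) (g : (OEdge m → ZMod 2) → ℝ) :
    ∑ᶠ σ ∈ Omega1 m N, g σ = ∑ σ : Omega1Group m N, g σ := by
  rw [finsum_mem_eq_finite_toFinset_sum _ (finite_Omega1 m N)]
  exact Finset.sum_subtype _ (fun _ => Set.Finite.mem_toFinset _) g

theorem rho_add (a b : ZMod 2) : rho (a + b) = rho a * rho b := by
  have cases : ∀ c : ZMod 2, c = 0 ∨ c = 1 := by decide
  rcases cases a with rfl | rfl <;> rcases cases b with rfl | rfl <;>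
    simp [rho, show (1 + 1 : ZMod 2) = 0 from rfl]

noncomputable def rhoChar : AddChar (ZMod 2) ℝ where
  toFun := rho
  map_zero_eq_one' := by simp [rho]
  map_add_eq_mul' := rho_add

def dOneHom (p : OPlaq m) : (OEdge m → ZMod 2) →+ ZMod 2 where
  toFun σ := dOne σ p
  map_zero' := by simp [dOne, Pi.zero_def]
  map_add' σ τ := List.sum_map_add ..

noncomputable def plaqChar (N : ℕ) (p : OPlaq m) : AddChar (Omega1Group m N) ℝ :=
  (rhoChar.compAddMonoidHom (dOneHom p)).compAddMonoidHom (Omega1Group m N).subtype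

noncomputable def wilsonChar (γ : OEdge m → ℤ) (hγ : (Function.support γ).Finite) :
    AddChar (OEdge m → ZMod 2) ℝ where
  toFun := wilson m γ
  map_zero_eq_one' := by simp [wilson, rho]
  map_add_eq_mul' σ τ := by
    simp only [wilson, Pi.add_apply, rho_add]
    exact finprod_mem_mul_distrib (hγ.subset fun _ he => he.1)

theorem exp_neg_mul_action (N : ℕ) (β : ℝ) (σ : Omega1Group m N) :
    exp (-β * action m N σ) = boltzmann (finite_C2 m N).toFinset (fun _ => β) (plaqChar N) σ := by
  rw [action, finsum_mem_eq_finite_toFinset_sum _ (finite_C2 m N), neg_mul_neg, Finset.mul_sum,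
    boltzmann]
  rfl

theorem Eexp_eq_gibbsExpect (N : ℕ) (β : ℝ) (f : (OEdge m → ZMod 2) → ℝ) :
    Eexp m N β f = gibbsExpect (finite_C2 m N).toFinset (fun _ => β) (plaqChar N)
      fun σ : Omega1Group m N => f σ := by
  simp only [Eexp, gibbsExpect, finsum_mem_Omega1_eq_sum, exp_neg_mul_action]

end

theorem griffiths_second_general (m N : ℕ) (β : ℝ) (hβ : 0 ≤ β)
    (γ₁ γ₂ : OEdge m → ℤ) (h₁ : LoopIn m N γ₁) (h₂ : LoopIn m N γ₂) :
    Eexp m N β (fun σ => wilson m γ₁ σ * wilson m γ₂ σ)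
      ≥ Ewilson m N β γ₁ * Ewilson m N β γ₂ := by
  rw [ge_iff_le, Ewilson, Ewilson, Eexp_eq_gibbsExpect, Eexp_eq_gibbsExpect, Eexp_eq_gibbsExpect]
  exact gibbsExpect_mul_le _ _ (fun _ _ => hβ) _
    ((wilsonChar γ₁ h₁.1.finite_supp).compAddMonoidHom (Omega1Group m N).subtype)
    ((wilsonChar γ₂ h₂.1.finite_supp).compAddMonoidHom (Omega1Group m N).subtype)

/-- **Griffiths' second inequality** for Ising lattice gauge theory (Proposition 7(i)). -/
theorem griffiths_second (m N : ℕ) (hm : 3 ≤ m) (hN : 1 ≤ N) (β : ℝ) (hβ : 0 ≤ β)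
    (γ₁ γ₂ : OEdge m → ℤ) (h₁ : LoopIn m N γ₁) (h₂ : LoopIn m N γ₂)
    (hne₁ : (CurSet m N γ₁).Nonempty) (hne₂ : (CurSet m N γ₂).Nonempty) :
    Eexp m N β (fun σ => wilson m γ₁ σ * wilson m γ₂ σ)
      ≥ Ewilson m N β γ₁ * Ewilson m N β γ₂ :=
  griffiths_second_general m N β hβ γ₁ γ₂ h₁ h₂

end LGT
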